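/- Let X, Y, Z be random vectors, with W_X, W_Y, W_Z the Moore–Penrose inverses of Var(X), Var(Y), Var(Z) respectively. If Cov_Y(X,Z) = 0 (adjusted orthogonality of X and Z given Y), then T_X(Z) = P_Y(Z)·T_X(Y)·P_Z(Y), i.e. Cov(Z,X)·W_X·Cov(X,Z)·W_Z = Cov(Z,Y)·W_Y·[Cov(Y,X)·W_X·Cov(X,Y)·W_Y]·Cov(Y,Z)·W_Z. -/

import Mathlib

/-! Expanding the adjusted covariance bilinearly gives
`Cov_Y(X,Z) = Cov(X,Z) - Cov(X,Y) W_Y Cov(Y,Z)`: the two cross terms and the quadratic term all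
collapse to `Cov(X,Y) W_Y Cov(Y,Z)` because `W_Y Var(Y) W_Y = W_Y` and `W_Y` is symmetric (a
Moore–Penrose inverse is unique, and `W_Yᵀ` is one of `Var(Y)ᵀ = Var(Y)`). Adjusted orthogonality
therefore factors `Cov(X,Z)`, and by transposition `Cov(Z,X)`, through `Y`; substituting both
factorisations into `T_X(Z)` gives the claim. -/

open MeasureTheory Matrix

variable {Ω : Type*}

/-- The covariance matrix of two random vectors `B` (dimension `m`) and `D` (dimension `n`):
the `(i,j)` entry is `E[Bᵢ·Dⱼ] − E[Bᵢ]·E[Dⱼ]`. -/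
noncomputable def cov [MeasurableSpace Ω] (μ : Measure Ω) {m n : ℕ}
    (B : Fin m → Ω → ℝ) (D : Fin n → Ω → ℝ) : Matrix (Fin m) (Fin n) ℝ :=
  Matrix.of fun i j =>
    (∫ ω, B i ω * D j ω ∂μ) - (∫ ω, B i ω ∂μ) * (∫ ω, D j ω ∂μ)

/-- `W` is a Moore–Penrose inverse of `V`. -/
def IsMoorePenrose {m n : ℕ} (V : Matrix (Fin m) (Fin n) ℝ)
    (W : Matrix (Fin n) (Fin m) ℝ) : Prop :=
  V * W * V = V ∧ W * V * W = W ∧ (V * W)ᵀ = V * W ∧ (W * V)ᵀ = W * V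

/-- The adjusted expectation `E_D(B)` (computed with the matrix `W`, intended to be the
Moore–Penrose inverse of `Var(D)`): the `i`-th component is
`E[Bᵢ] + Σ_j (Cov(B,D)·W)_{ij}·(Dⱼ − E[Dⱼ])`. -/
noncomputable def adjExp [MeasurableSpace Ω] (μ : Measure Ω) {m n : ℕ}
    (B : Fin m → Ω → ℝ) (D : Fin n → Ω → ℝ)
    (W : Matrix (Fin n) (Fin n) ℝ) : Fin m → Ω → ℝ :=
  fun i ω => (∫ ω', B i ω' ∂μ) + ∑ j, (cov μ B D * W) i j * (D j ω - ∫ ω', D j ω' ∂μ)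

/-- The adjusted covariance `Cov_D(B,C) = Cov(B − E_D(B), C − E_D(C))`. -/
noncomputable def adjCov [MeasurableSpace Ω] (μ : Measure Ω) {m p n : ℕ}
    (B : Fin m → Ω → ℝ) (C : Fin p → Ω → ℝ) (D : Fin n → Ω → ℝ)
    (W : Matrix (Fin n) (Fin n) ℝ) : Matrix (Fin m) (Fin p) ℝ :=
  cov μ (fun i ω => B i ω - adjExp μ B D W i ω) (fun j ω => C j ω - adjExp μ C D W j ω)

namespace IsMoorePenrose

variable {m n : ℕ} {V : Matrix (Fin m) (Fin n) ℝ} {W W' : Matrix (Fin n) (Fin m) ℝ}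

theorem transpose (h : IsMoorePenrose V W) : IsMoorePenrose Vᵀ Wᵀ := by
  obtain ⟨h₁, h₂, h₃, h₄⟩ := h
  refine ⟨?_, ?_, ?_, ?_⟩
  · simpa only [transpose_mul, Matrix.mul_assoc] using congrArg Matrix.transpose h₁
  · simpa only [transpose_mul, Matrix.mul_assoc] using congrArg Matrix.transpose h₂
  · rw [← transpose_mul, transpose_transpose, h₄]
  · rw [← transpose_mul, transpose_transpose, h₃]

theorem unique (h : IsMoorePenrose V W) (h' : IsMoorePenrose V W') : W = W' := by
  obtain ⟨h₁, h₂, h₃, h₄⟩ := h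
  obtain ⟨h₁', h₂', h₃', h₄'⟩ := h'
  have left : W = W * V * W' :=
    calc W = W * (V * W)ᵀ := by rw [h₃, ← Matrix.mul_assoc, h₂]
      _ = W * (V * W' * V * W)ᵀ := by rw [h₁']
      _ = W * ((V * W)ᵀ * (V * W')ᵀ) := by rw [← transpose_mul, Matrix.mul_assoc (V * W')]
      _ = W * V * W' := by rw [h₃, h₃', ← Matrix.mul_assoc, ← Matrix.mul_assoc W V W, h₂,
        Matrix.mul_assoc]
  have right : W' = W * V * W' :=
    calc W' = (W' * V)ᵀ * W' := by rw [h₄', h₂']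
      _ = (W' * (V * W * V))ᵀ * W' := by rw [h₁]
      _ = (W * V)ᵀ * (W' * V)ᵀ * W' := by rw [← transpose_mul]; simp only [Matrix.mul_assoc]
      _ = W * V * W' := by rw [h₄, h₄', Matrix.mul_assoc (W * V), h₂']
  rw [left, ← right]

theorem transpose_eq_self {V W : Matrix (Fin n) (Fin n) ℝ} (h : IsMoorePenrose V W)
    (hV : Vᵀ = V) : Wᵀ = W :=
  (hV ▸ h.transpose).unique h

end IsMoorePenrose

section Covariance

variable [MeasurableSpace Ω] {μ : Measure Ω} {m n p : ℕ}

theorem cov_transpose (B : Fin m → Ω → ℝ) (D : Fin n → Ω → ℝ) : (cov μ B D)ᵀ = cov μ D B := by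
  ext i j
  simp [cov, mul_comm]

variable {B B' : Fin m → Ω → ℝ} {C : Fin p → Ω → ℝ} {D : Fin n → Ω → ℝ}

theorem cov_sub_left [IsFiniteMeasure μ] (hB : ∀ i, MemLp (B i) 2 μ)
    (hB' : ∀ i, MemLp (B' i) 2 μ) (hC : ∀ j, MemLp (C j) 2 μ) :
    cov μ (fun i ω => B i ω - B' i ω) C = cov μ B C - cov μ B' C := by
  ext i j
  have hBC : Integrable (fun ω => B i ω * C j ω) μ := (hB i).integrable_mul (hC j)
  have hB'C : Integrable (fun ω => B' i ω * C j ω) μ := (hB' i).integrable_mul (hC j)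
  simp only [cov, of_apply, Matrix.sub_apply, sub_mul]
  rw [integral_sub hBC hB'C, integral_sub ((hB i).integrable one_le_two)
    ((hB' i).integrable one_le_two)]
  ring

theorem cov_add_const_left [IsProbabilityMeasure μ] (hB : ∀ i, MemLp (B i) 2 μ)
    (hC : ∀ j, MemLp (C j) 2 μ) (c : Fin m → ℝ) :
    cov μ (fun i ω => B i ω + c i) C = cov μ B C := by
  ext i j
  have hBC : Integrable (fun ω => B i ω * C j ω) μ := (hB i).integrable_mul (hC j)
  simp only [cov, of_apply, add_mul]
  rw [integral_add hBC (((hC j).integrable one_le_two).const_mul (c i)),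
    integral_add ((hB i).integrable one_le_two) (integrable_const _), integral_const_mul,
    integral_const]
  simp only [probReal_univ, smul_eq_mul, one_mul]
  ring

theorem cov_sum_mul_left [IsFiniteMeasure μ] (A : Matrix (Fin m) (Fin n) ℝ)
    (hD : ∀ k, MemLp (D k) 2 μ) (hC : ∀ j, MemLp (C j) 2 μ) :
    cov μ (fun i ω => ∑ k, A i k * D k ω) C = A * cov μ D C := by
  ext i j
  have hDC : ∀ k, Integrable (fun ω => D k ω * C j ω) μ := fun k => (hD k).integrable_mul (hC j)
  simp only [cov, of_apply, mul_apply, Finset.sum_mul, mul_assoc]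
  rw [integral_finsetSum _ fun k _ => (hDC k).const_mul (A i k),
    integral_finsetSum _ fun k _ => ((hD k).integrable one_le_two).const_mul (A i k)]
  simp only [integral_const_mul, mul_sub, Finset.sum_sub_distrib, Finset.sum_mul, mul_assoc]

theorem cov_sub_right [IsFiniteMeasure μ] (hB : ∀ i, MemLp (B i) 2 μ)
    (hB' : ∀ i, MemLp (B' i) 2 μ) (hC : ∀ j, MemLp (C j) 2 μ) :
    cov μ C (fun i ω => B i ω - B' i ω) = cov μ C B - cov μ C B' := by
  rw [← cov_transpose, cov_sub_left hB hB' hC, transpose_sub, cov_transpose, cov_transpose]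

theorem cov_sum_mul_right [IsFiniteMeasure μ] (A : Matrix (Fin m) (Fin n) ℝ)
    (hD : ∀ k, MemLp (D k) 2 μ) (hC : ∀ j, MemLp (C j) 2 μ) :
    cov μ C (fun i ω => ∑ k, A i k * D k ω) = cov μ C D * Aᵀ := by
  rw [← cov_transpose, cov_sum_mul_left A hD hC, transpose_mul, cov_transpose]

theorem cov_add_const [IsProbabilityMeasure μ] (hB : ∀ i, MemLp (B i) 2 μ)
    (hC : ∀ j, MemLp (C j) 2 μ) (b : Fin m → ℝ) (c : Fin p → ℝ) :
    cov μ (fun i ω => B i ω + b i) (fun j ω => C j ω + c j) = cov μ B C := by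
  have hCc : ∀ j, MemLp (fun ω => C j ω + c j) 2 μ := fun j => (hC j).add (memLp_const (c j))
  rw [cov_add_const_left hB hCc, ← cov_transpose, cov_add_const_left hC hB, cov_transpose]

theorem cov_sub_sum_mul [IsFiniteMeasure μ] (M : Matrix (Fin m) (Fin n) ℝ)
    (N : Matrix (Fin p) (Fin n) ℝ) (hB : ∀ i, MemLp (B i) 2 μ) (hC : ∀ j, MemLp (C j) 2 μ)
    (hD : ∀ k, MemLp (D k) 2 μ) :
    cov μ (fun i ω => B i ω - ∑ k, M i k * D k ω) (fun j ω => C j ω - ∑ k, N j k * D k ω) =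
      cov μ B C - cov μ B D * Nᵀ - M * cov μ D C + M * cov μ D D * Nᵀ := by
  have hMD : ∀ i, MemLp (fun ω => ∑ k, M i k * D k ω) 2 μ :=
    fun i => memLp_finsetSum _ fun k _ => (hD k).const_mul _
  have hND : ∀ j, MemLp (fun ω => ∑ k, N j k * D k ω) 2 μ :=
    fun j => memLp_finsetSum _ fun k _ => (hD k).const_mul _
  have hCres : ∀ j, MemLp (fun ω => C j ω - ∑ k, N j k * D k ω) 2 μ :=
    fun j => (hC j).sub (hND j)
  rw [cov_sub_left hB hMD hCres, cov_sub_right hC hND hB,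
    cov_sub_right hC hND hMD, cov_sum_mul_left M hD hC, cov_sum_mul_left M hD hND,
    cov_sum_mul_right N hD hB, cov_sum_mul_right N hD hD, Matrix.mul_assoc]
  abel

end Covariance

section Adjusted

variable [MeasurableSpace Ω] {μ : Measure Ω} {m n p : ℕ}
  {B : Fin m → Ω → ℝ} {C : Fin p → Ω → ℝ} {D : Fin n → Ω → ℝ}

theorem sub_adjExp (W : Matrix (Fin n) (Fin n) ℝ) (i : Fin m) (ω : Ω) :
    B i ω - adjExp μ B D W i ω =
      (B i ω - ∑ k, (cov μ B D * W) i k * D k ω) +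
        (∑ k, (cov μ B D * W) i k * ∫ ω', D k ω' ∂μ - ∫ ω', B i ω' ∂μ) := by
  simp only [adjExp, mul_sub, Finset.sum_sub_distrib]
  ring

theorem adjCov_eq [IsProbabilityMeasure μ] (W : Matrix (Fin n) (Fin n) ℝ)
    (hB : ∀ i, MemLp (B i) 2 μ) (hC : ∀ j, MemLp (C j) 2 μ) (hD : ∀ k, MemLp (D k) 2 μ) :
    adjCov μ B C D W =
      cov μ B C - cov μ B D * (cov μ C D * W)ᵀ - cov μ B D * W * cov μ D C +
        cov μ B D * W * cov μ D D * (cov μ C D * W)ᵀ := by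
  have memLp_residual : ∀ {q} (E : Fin q → Ω → ℝ) (M : Matrix (Fin q) (Fin n) ℝ),
      (∀ i, MemLp (E i) 2 μ) → ∀ i, MemLp (fun ω => E i ω - ∑ k, M i k * D k ω) 2 μ :=
    fun E M hE i => (hE i).sub (memLp_finsetSum _ fun k _ => (hD k).const_mul _)
  simp only [adjCov, sub_adjExp]
  rw [cov_add_const (memLp_residual B _ hB) (memLp_residual C _ hC),
    cov_sub_sum_mul _ _ hB hC hD]

theorem adjCov_eq_of_isMoorePenrose [IsProbabilityMeasure μ] {W : Matrix (Fin n) (Fin n) ℝ}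
    (hW : IsMoorePenrose (cov μ D D) W)
    (hB : ∀ i, MemLp (B i) 2 μ) (hC : ∀ j, MemLp (C j) 2 μ) (hD : ∀ k, MemLp (D k) 2 μ) :
    adjCov μ B C D W = cov μ B C - cov μ B D * W * cov μ D C := by
  have hWW : Wᵀ = W := hW.transpose_eq_self (cov_transpose D D)
  have hWVW : cov μ B D * W * cov μ D D * W = cov μ B D * W := by
    rw [Matrix.mul_assoc (cov μ B D * W), Matrix.mul_assoc (cov μ B D), ← Matrix.mul_assoc W,
      hW.2.1]
  rw [adjCov_eq W hB hC hD, transpose_mul, hWW, cov_transpose, ← Matrix.mul_assoc,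
    ← Matrix.mul_assoc, hWVW]
  abel

end Adjusted

theorem transf_comp_of_adjOrth_general [MeasurableSpace Ω] (μ : Measure Ω) [IsProbabilityMeasure μ]
    {mx my mz : ℕ} (X : Fin mx → Ω → ℝ) (Y : Fin my → Ω → ℝ) (Z : Fin mz → Ω → ℝ)
    (hX : ∀ i, Measurable (X i) ∧ MemLp (X i) 2 μ)
    (hY : ∀ i, Measurable (Y i) ∧ MemLp (Y i) 2 μ)
    (hZ : ∀ i, Measurable (Z i) ∧ MemLp (Z i) 2 μ)
    (WX : Matrix (Fin mx) (Fin mx) ℝ)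
    (WY : Matrix (Fin my) (Fin my) ℝ) (hWY : IsMoorePenrose (cov μ Y Y) WY)
    (WZ : Matrix (Fin mz) (Fin mz) ℝ)
    (horth : adjCov μ X Z Y WY = 0) :
    cov μ Z X * WX * cov μ X Z * WZ =
      cov μ Z Y * WY * (cov μ Y X * WX * cov μ X Y * WY) * cov μ Y Z * WZ := by
  have hXZ : cov μ X Z = cov μ X Y * WY * cov μ Y Z := by
    rw [← sub_eq_zero, ← adjCov_eq_of_isMoorePenrose hWY (fun i => (hX i).2) (fun i => (hZ i).2)
      (fun i => (hY i).2), horth]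
  have hZX : cov μ Z X = cov μ Z Y * WY * cov μ Y X := by
    rw [← cov_transpose, hXZ, transpose_mul, transpose_mul, cov_transpose, cov_transpose,
      hWY.transpose_eq_self (cov_transpose Y Y), Matrix.mul_assoc]
  rw [hXZ, hZX]
  simp only [Matrix.mul_assoc]

/-- Theorem 1, eq. (15) of the paper: if `Cov_Y(X,Z) = 0` then
`T_X(Z) = P_Y(Z)·T_X(Y)·P_Z(Y)`, i.e.
`Cov(Z,X)·W_X·Cov(X,Z)·W_Z = Cov(Z,Y)·W_Y·[Cov(Y,X)·W_X·Cov(X,Y)·W_Y]·Cov(Y,Z)·W_Z`. -/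
theorem transf_comp_of_adjOrth [MeasurableSpace Ω] (μ : Measure Ω) [IsProbabilityMeasure μ]
    {mx my mz : ℕ} (X : Fin mx → Ω → ℝ) (Y : Fin my → Ω → ℝ) (Z : Fin mz → Ω → ℝ)
    (hX : ∀ i, Measurable (X i) ∧ MemLp (X i) 2 μ)
    (hY : ∀ i, Measurable (Y i) ∧ MemLp (Y i) 2 μ)
    (hZ : ∀ i, Measurable (Z i) ∧ MemLp (Z i) 2 μ)
    (WX : Matrix (Fin mx) (Fin mx) ℝ) (hWX : IsMoorePenrose (cov μ X X) WX)
    (WY : Matrix (Fin my) (Fin my) ℝ) (hWY : IsMoorePenrose (cov μ Y Y) WY)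
    (WZ : Matrix (Fin mz) (Fin mz) ℝ) (hWZ : IsMoorePenrose (cov μ Z Z) WZ)
    (horth : adjCov μ X Z Y WY = 0) :
    cov μ Z X * WX * cov μ X Z * WZ =
      cov μ Z Y * WY * (cov μ Y X * WX * cov μ X Y * WY) * cov μ Y Z * WZ :=
  transf_comp_of_adjOrth_general μ X Y Z hX hY hZ WX WY hWY WZ horth
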